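/- arXiv:2409.10208 — 6 statements merged into one kernel-verified Lean document; each statement's English description precedes it below -/
import Mathlib

section
/- Let R be a (possibly non-commutative) ring with 1. The set Null(R) of polynomials f ∈ R[x] such that f(r) = 0 for all r ∈ R (under right substitution, i.e., f(r) = Σ aᵢ rⁱ for f = Σ aᵢ xⁱ) is a left ideal of R[x]. -/
open Polynomial

lemma eval_monomial_mul' {R : Type*} [Ring R] (n : ℕ) (a : R) (f : Polynomial R) (r : R) :
    (monomial n a * f).eval r = a * f.eval r * r ^ n := by
  have h : monomial n a * f = C a * f * X ^ n := by
    rw [← C_mul_X_pow_eq_monomial, mul_assoc, X_pow_mul, ← mul_assoc]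
  rw [h, eval_mul_X_pow, eval_C_mul]

/-- The set of null polynomials (under right substitution) on a possibly
non-commutative ring `R` is a left ideal of `R[x]`. -/
theorem null_polynomials_left_ideal (R : Type*) [Ring R] :
    ∃ I : Ideal (Polynomial R),
      ∀ f : Polynomial R, f ∈ I ↔ ∀ r : R, Polynomial.eval r f = 0 := by
  refine ⟨{ carrier := {f | ∀ r : R, Polynomial.eval r f = 0}
            zero_mem' := by simp
            add_mem' := fun {f g} hf hg r => by simp [hf r, hg r]
            smul_mem' := fun c f hf => by
              induction c using Polynomial.induction_on' with
              | add p q hp hq =>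
                  intro r
                  have : (p + q) • f = p • f + q • f := add_smul p q f
                  simp only [this, eval_add, hp r, hq r, add_zero]
              | monomial n a =>
                  intro r
                  simp only [smul_eq_mul, eval_monomial_mul', hf r,
                    mul_zero, zero_mul] }, fun f => Iff.rfl⟩
end

section
/- Let R be a non-commutative ring and Null(R) the set of null polynomials on R (with right substitution). Then Null(R) is a two-sided ideal of R[x] if and only if Null(R) is closed under right multiplication by elements of R (i.e., is a right R-module). -/
/-!
Since `X` is central in `R[X]`, right substitution satisfies `(p * X ^ n)(r) = p(r) * r ^ n`.
Hence `(C a * X ^ n * f)(r) = a * f(r) * r ^ n`, so the null polynomials always form a left ideal,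
and `(f * C a * X ^ n)(r) = (f * C a)(r) * r ^ n`, so closure under right multiplication by
arbitrary polynomials reduces to closure under right multiplication by constants.
-/

open Polynomial

namespace Polynomial

variable {R : Type*} [Ring R]

theorem eval_mul_eq_zero_of_eval_eq_zero {f : R[X]} {r : R} (hf : f.eval r = 0) (g : R[X]) :
    (g * f).eval r = 0 := by
  induction g using Polynomial.induction_on' with
  | add p q hp hq => rw [add_mul, eval_add, hp, hq, add_zero]
  | monomial n a =>
    rw [← C_mul_X_pow_eq_monomial, mul_assoc, X_pow_mul, eval_C_mul, eval_mul_X_pow, hf,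
      zero_mul, mul_zero]

theorem eval_mul_eq_zero_of_forall_eval_mul_C_eq_zero {f : R[X]} {r : R}
    (hf : ∀ a, (f * C a).eval r = 0) (g : R[X]) : (f * g).eval r = 0 := by
  induction g using Polynomial.induction_on' with
  | add p q hp hq => rw [mul_add, eval_add, hp, hq, add_zero]
  | monomial n a => rw [← C_mul_X_pow_eq_monomial, ← mul_assoc, eval_mul_X_pow, hf, zero_mul]

variable (R) in
def nullIdeal : Ideal R[X] where
  carrier := {f | ∀ r : R, f.eval r = 0}
  zero_mem' _ := eval_zero
  add_mem' hf hg r := by rw [eval_add, hf r, hg r, add_zero]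
  smul_mem' g _ hf r := eval_mul_eq_zero_of_eval_eq_zero (hf r) g

theorem nullIdeal_isTwoSided (h : ∀ f ∈ nullIdeal R, ∀ c : R, f * C c ∈ nullIdeal R) :
    (nullIdeal R).IsTwoSided where
  mul_mem_of_left g hf r :=
    eval_mul_eq_zero_of_forall_eval_mul_C_eq_zero (fun c ↦ h _ hf c r) g

end Polynomial

/-- `Null(R)` is a two-sided ideal of `R[x]` iff it is closed under right
multiplication by elements of `R`. -/
theorem null_twoSidedIdeal_iff_right_closed (R : Type*) [Ring R] :
    (∃ I : TwoSidedIdeal (Polynomial R),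
        ∀ f : Polynomial R, f ∈ I ↔ ∀ r : R, Polynomial.eval r f = 0) ↔
    (∀ f : Polynomial R, (∀ r : R, Polynomial.eval r f = 0) →
        ∀ c : R, ∀ r : R, Polynomial.eval r (f * Polynomial.C c) = 0) := by
  constructor
  · rintro ⟨I, hI⟩ f hf c
    exact (hI _).1 (I.mul_mem_right _ _ ((hI f).2 hf))
  · intro h
    have := nullIdeal_isTwoSided h
    exact ⟨(nullIdeal R).toTwoSided, fun f ↦ Ideal.mem_toTwoSided⟩
end

section
/- Let R be a finite ring and f ∈ R[x] a central null polynomial on R (all coefficients central in R and f(r) = 0 for all r ∈ R). Then f² is a central null polynomial on R_k for every k ≥ 1. -/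
/-- The ring of dual numbers in `k` variables over `R`. -/
abbrev DualK (R : Type*) [Ring R] (k : ℕ) := TrivSqZeroExt R (Fin k → R)

lemma inl_central {R : Type*} [Ring R] (k : ℕ) (r : R) (hr : r ∈ Set.center R) :
    TrivSqZeroExt.inl r ∈ Set.center (TrivSqZeroExt R (Fin k → R)) := by
  rw [Semigroup.mem_center_iff]
  intro g
  ext
  · simp [TrivSqZeroExt.fst_mul, (Semigroup.mem_center_iff.mp hr g.fst)]
  · simp only [TrivSqZeroExt.snd_mul, TrivSqZeroExt.snd_inl, TrivSqZeroExt.fst_inl,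
      smul_zero, add_zero, zero_add]
    rename_i i
    simp [MulOpposite.smul_eq_mul_unop, Semigroup.mem_center_iff.mp hr (g.snd i)]

/-- If `f ∈ R[x]` is a central null polynomial on `R`, then `f²` is a central
null polynomial on `R_k` for every `k ≥ 1`. -/
theorem sq_central_null_on_dualK {R : Type*} [Ring R] [Fintype R]
    (f : Polynomial R) (hc : ∀ n : ℕ, f.coeff n ∈ Set.center R)
    (hnull : ∀ r : R, Polynomial.eval r f = 0) (k : ℕ) (hk : 1 ≤ k) :
    (∀ n : ℕ, (TrivSqZeroExt.inlHom R (Fin k → R)) ((f ^ 2).coeff n)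
        ∈ Set.center (DualK R k)) ∧
      ∀ c : DualK R k,
        Polynomial.eval₂ (TrivSqZeroExt.inlHom R (Fin k → R)) c (f ^ 2) = 0 := by
  have hc2 : ∀ n : ℕ, (f ^ 2).coeff n ∈ Set.center R := by
    intro n
    have : (f ^ 2).coeff n ∈ Subring.center R := by
      rw [sq, Polynomial.coeff_mul]
      exact Subring.sum_mem _ fun p _ => Subring.mul_mem _ (hc p.1) (hc p.2)
    exact this
  constructor
  · intro n
    exact inl_central k _ (hc2 n)
  · intro c
    have hcomm : ∀ n : ℕ, Commute ((TrivSqZeroExt.inlHom R (Fin k → R)) (f.coeff n)) c :=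
      fun n => (Semigroup.mem_center_iff.mp (inl_central k _ (hc n)) c).symm
    rw [sq, Polynomial.eval₂_mul_noncomm _ _ hcomm]
    have hfst : (Polynomial.eval₂ (TrivSqZeroExt.inlHom R (Fin k → R)) c f).fst = 0 := by
      have := Polynomial.hom_eval₂ f (TrivSqZeroExt.inlHom R (Fin k → R))
        (TrivSqZeroExt.fstHom ℕ R (Fin k → R)).toRingHom c
      have hcomp : (TrivSqZeroExt.fstHom ℕ R (Fin k → R)).toRingHom.comp
          (TrivSqZeroExt.inlHom R (Fin k → R)) = RingHom.id R := by
        ext r; simp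
      rw [hcomp] at this
      have h2 : Polynomial.eval₂ (RingHom.id R) c.fst f = 0 := hnull c.fst
      simpa [h2] using this
    set x := Polynomial.eval₂ (TrivSqZeroExt.inlHom R (Fin k → R)) c f
    ext
    · simp [TrivSqZeroExt.fst_mul, hfst]
    · simp [TrivSqZeroExt.snd_mul, hfst]
end

section
/- Every finite chain ring R (finite ring whose left ideals form a chain) is semi-commutative: for all a, b ∈ R with ab = 0, we have a·d·b = 0 for every d ∈ R. -/
/-!
The left ideal `R a d` is the image of `R a` under the left-linear map `x ↦ x d`, so in a finite
ring it cannot strictly contain `R a`. Comparability therefore gives `a d ∈ R a`, say `a d = r a`,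
and then `a d b = r a b = 0`.
-/

theorem Submodule.map_eq_self_of_le_map {R M : Type*} [Semiring R] [AddCommMonoid M] [Module R M]
    [Finite M] (f : M →ₗ[R] M) {p : Submodule R M} (h : p ≤ p.map f) : p.map f = p := by
  have hcard : (f '' p).ncard ≤ (p : Set M).ncard := Set.ncard_image_le
  refine (SetLike.coe_injective (Set.eq_of_subset_of_ncard_le h ?_)).symm
  rwa [Submodule.map_coe]

theorem Ideal.span_singleton_mul_right {R : Type*} [Ring R] (a d : R) :
    Ideal.span {a * d} = Submodule.map (LinearMap.toSpanSingleton R R d) (Ideal.span {a}) := by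
  rw [Ideal.span, Ideal.span, Submodule.map_span, Set.image_singleton]
  rfl

theorem Ideal.mul_mem_span_singleton_of_le_total {R : Type*} [Ring R] [Finite R]
    (hchain : ∀ I J : Ideal R, I ≤ J ∨ J ≤ I) (a d : R) : a * d ∈ Ideal.span {a} := by
  rcases hchain (Ideal.span {a * d}) (Ideal.span {a}) with h | h
  · exact h (Ideal.subset_span rfl)
  · have hmap := Ideal.span_singleton_mul_right a d
    rw [hmap] at h
    rw [← Submodule.map_eq_self_of_le_map _ h, ← hmap]
    exact Ideal.mem_span_singleton_self _

/-- A finite chain ring (finite ring whose left ideals form a chain) is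
semi-commutative: `a * b = 0` implies `a * d * b = 0` for all `d`. -/
theorem finite_chain_ring_semicommutative {R : Type*} [Ring R] [Fintype R]
    (hchain : ∀ I J : Ideal R, I ≤ J ∨ J ≤ I) :
    ∀ a b : R, a * b = 0 → ∀ d : R, a * d * b = 0 := by
  intro a b hab d
  obtain ⟨r, hr⟩ := Ideal.mem_span_singleton'.mp (Ideal.mul_mem_span_singleton_of_le_total hchain a d)
  rw [← hr, mul_assoc, hab, mul_zero]
end

section
/- Let R be a finite chain ring, f ∈ R[x], and a, m ∈ R with m² = 0. Then f(a + m) = f(a) + λ_f(a, m), where λ_f(a,m) = Σ_{j≥1} Σ_{r=1}^j a_j a^{r-1} m a^{j-r} for f = Σ a_j x^j. -/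
/-!
In a finite ring whose left ideals form a chain, every principal left ideal `Rm` is stable under
right multiplication: `Rmx` is the image of `Rm` under `· * x`, so it has at most `|Rm|` elements
and cannot strictly contain `Rm`; hence `Rmx ⊆ Rm`. If `m² = 0` this gives `mxm ∈ Rm·m = 0` for
all `x`, so in the expansion of `(a + m)^j` every word with two letters `m` vanishes and
`(a + m)^j = a^j + Σ_r a^r m a^(j-1-r)`; summing against the coefficients of `f` gives the claim.
-/

/-- The assigned function `λ_f(a,b) = Σ_{j≥1} Σ_{r=1}^j a_j a^{r-1} b a^{j-r}`. -/
noncomputable def lamPoly {R : Type*} [Ring R] (f : Polynomial R) (a b : R) : R :=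
  f.sum fun j c => ∑ r ∈ Finset.range j, c * a ^ r * b * a ^ (j - 1 - r)

open Finset Polynomial

theorem mul_mem_span_singleton_of_chain {R : Type*} [Ring R] [Finite R]
    (hchain : ∀ I J : Ideal R, I ≤ J ∨ J ≤ I) (m x : R) : m * x ∈ Ideal.span {m} := by
  rcases hchain (Ideal.span {m * x}) (Ideal.span {m}) with h | h
  · exact h (Ideal.mem_span_singleton_self _)
  · set S : Set R := ↑(Ideal.span {m} : Ideal R)
    have hS : S ⊆ (· * x) '' S := fun z hz => by
      obtain ⟨c, rfl⟩ := Ideal.mem_span_singleton'.mp (h hz)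
      exact ⟨c * m, Ideal.mem_span_singleton'.mpr ⟨c, rfl⟩, mul_assoc c m x⟩
    have hfix : (· * x) '' S = S :=
      (Set.eq_of_subset_of_ncard_le hS (Set.ncard_image_le S.toFinite) (Set.toFinite _)).symm
    exact (hfix ▸ ⟨m, Ideal.mem_span_singleton_self m, rfl⟩ : m * x ∈ S)

theorem mul_mul_eq_zero_of_chain {R : Type*} [Ring R] [Finite R]
    (hchain : ∀ I J : Ideal R, I ≤ J ∨ J ≤ I) {m : R} (hm : m * m = 0) (x : R) :
    m * x * m = 0 := by
  obtain ⟨c, hc⟩ := Ideal.mem_span_singleton'.mp (mul_mem_span_singleton_of_chain hchain m x)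
  rw [← hc, mul_assoc, hm, mul_zero]

section

variable {R : Type*} [Ring R] {m : R}

theorem add_pow_of_mul_mul_eq_zero (hm : ∀ x, m * x * m = 0) (a : R) (j : ℕ) :
    (a + m) ^ j = a ^ j + ∑ r ∈ range j, a ^ r * m * a ^ (j - 1 - r) := by
  induction j with
  | zero => simp
  | succ k ih =>
    have hm_sum : m * ∑ r ∈ range k, a ^ r * m * a ^ (k - 1 - r) = 0 := by
      rw [mul_sum]
      exact sum_eq_zero fun r _ => by rw [← mul_assoc, ← mul_assoc, hm, zero_mul]
    have ha_sum : a * ∑ r ∈ range k, a ^ r * m * a ^ (k - 1 - r) =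
        ∑ r ∈ range k, a ^ (r + 1) * m * a ^ (k + 1 - 1 - (r + 1)) := by
      rw [mul_sum]
      refine sum_congr rfl fun r _ => ?_
      rw [← mul_assoc, ← mul_assoc, ← pow_succ']
      congr 2
      omega
    rw [pow_succ', ih, add_mul, mul_add, mul_add, hm_sum, ha_sum, sum_range_succ', ← pow_succ']
    simp only [pow_zero, one_mul, add_zero, Nat.add_sub_cancel, Nat.sub_zero]
    abel

theorem eval_add_of_mul_mul_eq_zero (hm : ∀ x, m * x * m = 0) (f : R[X]) (a : R) :
    eval (a + m) f = eval a f + lamPoly f a m := by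
  simp only [eval_eq_sum, lamPoly, sum_def, ← sum_add_distrib, add_pow_of_mul_mul_eq_zero hm,
    mul_add, mul_sum, mul_assoc]

end

/-- In a finite chain ring, if `m² = 0` then `f(a + m) = f(a) + λ_f(a, m)`. -/
theorem eval_add_sq_zero_chain {R : Type*} [Ring R] [Fintype R]
    (hchain : ∀ I J : Ideal R, I ≤ J ∨ J ≤ I)
    (f : Polynomial R) (a m : R) (hm : m * m = 0) :
    Polynomial.eval (a + m) f = Polynomial.eval a f + lamPoly f a m :=
  eval_add_of_mul_mul_eq_zero (mul_mul_eq_zero_of_chain hchain hm) f a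
end

section
/- Let R be a finite chain ring of characteristic p^c with c > 2, maximal ideal M of nilpotency index N. If a ∈ R satisfies p·a = 0, then a² = 0. -/
/-- In a finite chain ring of characteristic `p^c` with `c > 2`, if `p * a = 0`
then `a² = 0`. -/
theorem sq_eq_zero_of_p_mul_eq_zero {R : Type*} [Ring R] [Fintype R]
    (hchain : ∀ I J : Ideal R, I ≤ J ∨ J ≤ I)
    (p : ℕ) (hp : p.Prime) (c : ℕ) (hc : 2 < c) (hchar : CharP R (p ^ c)) :
    ∀ a : R, (p : R) * a = 0 → a * a = 0 := by
  intro a ha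
  have hpa : a * (p : R) = 0 := by
    rw [(Nat.cast_commute p a).eq] at ha; exact ha
  rcases hchain (Ideal.span {a}) (Ideal.span {(p : R)}) with h | h
  · have hma : a ∈ Ideal.span {(p : R)} := h (Ideal.mem_span_singleton_self a)
    rcases Ideal.mem_span_singleton'.mp hma with ⟨r, hr⟩
    calc a * a = r * ((p : R) * a) := by rw [← hr, mul_assoc]
    _ = 0 := by rw [ha, mul_zero]
  · exfalso
    have hmp : (p : R) ∈ Ideal.span {a} := h (Ideal.mem_span_singleton_self _)
    rcases Ideal.mem_span_singleton'.mp hmp with ⟨s, hs⟩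
    have hp2 : (p : R) * (p : R) = 0 := by
      calc (p : R) * (p : R) = s * (a * (p : R)) := by rw [← hs, mul_assoc]
      _ = 0 := by rw [hpa, mul_zero]
    have : ((p ^ 2 : ℕ) : R) = 0 := by push_cast; rw [pow_two]; exact hp2
    have hdvd : p ^ c ∣ p ^ 2 := (CharP.cast_eq_zero_iff R (p ^ c) (p ^ 2)).mp this
    have := (Nat.pow_dvd_pow_iff_le_right hp.one_lt).mp hdvd
    omega
end
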